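/- arXiv:math/0202068 — 6 statements merged into one kernel-verified Lean document; each statement's English description precedes it below -/
import Mathlib

section
/- Let α < β < γ with relations (g_i − g_j) D_i D_j = x_j D_i − x_i D_j for all i < j in {α,β,γ}, where g_α, g_β, g_γ are pairwise distinct real numbers and x_α, x_β, x_γ ∈ ℂ. Then the two reduction sequences of D_α D_β D_γ to ordered monomials (reducing the leftmost pair first versus the rightmost pair first) coincide; i.e. the A_{II}-type relations satisfy the overlap/diamond condition. -/
/- Free associative ℂ-algebra on three generators `D 0 = D_α`, `D 1 = D_β`, `D 2 = D_γ`
   (ordering α < β < γ).  We encode the quadratic relations in the generic form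
     D_α D_β = q1 • D_β D_α + b1 • D_α - a1 • D_β
     D_α D_γ = q2 • D_γ D_α + c2 • D_α - a2 • D_γ
     D_β D_γ = q3 • D_γ D_β + c3 • D_β - b3 • D_γ
   used as rewriting rules replacing `D_i D_j` for `i < j`. -/
noncomputable def D (i : Fin 3) : FreeAlgebra ℂ (Fin 3) := FreeAlgebra.ι ℂ i

/-- The result of the complete reduction of `D 0 * D 1 * D 2` to ordered monomials
obtained by first rewriting the leftmost pair `(D 0 * D 1)`. -/
noncomputable def leftRed (q1 q2 q3 a1 b1 a2 c2 b3 c3 : ℂ) : FreeAlgebra ℂ (Fin 3) :=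
  (q1*q2*q3) • (D 2 * D 1 * D 0) + (q1*q2*c3 + q1*c2) • (D 1 * D 0)
  + (b1*q2 - q1*q2*b3) • (D 2 * D 0) + (-(q1*a2*q3) - a1*q3) • (D 2 * D 1)
  + (b1*c2) • D 0 + (-(q1*a2*c3) - a1*c3) • D 1
  + (q1*a2*b3 - b1*a2 + a1*b3) • D 2

/-- The result of the complete reduction of `D 0 * D 1 * D 2` to ordered monomials
obtained by first rewriting the rightmost pair `(D 1 * D 2)`. -/
noncomputable def rightRed (q1 q2 q3 a1 b1 a2 c2 b3 c3 : ℂ) : FreeAlgebra ℂ (Fin 3) :=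
  (q1*q2*q3) • (D 2 * D 1 * D 0) + (q3*c2*q1 + c3*q1) • (D 1 * D 0)
  + (q2*q3*b1 - b3*q2) • (D 2 * D 0) + (-(q3*a2) - q2*q3*a1) • (D 2 * D 1)
  + (q3*c2*b1 + c3*b1 - b3*c2) • D 0 + (-(q3*c2*a1) - c3*a1) • D 1
  + (b3*a2) • D 2

/-- A_II relations: (g_i − g_j) D_i D_j = x_j D_i − x_i D_j for i < j, with
pairwise distinct g's (so q-coefficients vanish).  Diamond condition holds. -/
theorem AII_diamond (gα gβ gγ : ℝ) (hαβ : gα ≠ gβ) (hαγ : gα ≠ gγ) (hβγ : gβ ≠ gγ)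
    (xα xβ xγ : ℂ) :
    leftRed 0 0 0 (xα/((gα:ℂ)-gβ)) (xβ/((gα:ℂ)-gβ)) (xα/((gα:ℂ)-gγ)) (xγ/((gα:ℂ)-gγ))
        (xβ/((gβ:ℂ)-gγ)) (xγ/((gβ:ℂ)-gγ))
      = rightRed 0 0 0 (xα/((gα:ℂ)-gβ)) (xβ/((gα:ℂ)-gβ)) (xα/((gα:ℂ)-gγ)) (xγ/((gα:ℂ)-gγ))
        (xβ/((gβ:ℂ)-gγ)) (xγ/((gβ:ℂ)-gγ)) := by
  have h1 : ((gα:ℂ)-gβ) ≠ 0 := sub_ne_zero.mpr (by exact_mod_cast hαβ)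
  have h2 : ((gα:ℂ)-gγ) ≠ 0 := sub_ne_zero.mpr (by exact_mod_cast hαγ)
  have h3 : ((gβ:ℂ)-gγ) ≠ 0 := sub_ne_zero.mpr (by exact_mod_cast hβγ)
  unfold leftRed rightRed
  have e0 : (xβ/((gα:ℂ)-gβ)) * (xγ/((gα:ℂ)-gγ))
      = (xγ/((gβ:ℂ)-gγ)) * (xβ/((gα:ℂ)-gβ)) - (xβ/((gβ:ℂ)-gγ)) * (xγ/((gα:ℂ)-gγ)) := by
    field_simp; ring
  have e2 : (0:ℂ)*(xα/((gα:ℂ)-gγ))*(xβ/((gβ:ℂ)-gγ)) - (xβ/((gα:ℂ)-gβ))*(xα/((gα:ℂ)-gγ))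
      + (xα/((gα:ℂ)-gβ))*(xβ/((gβ:ℂ)-gγ)) = (xβ/((gβ:ℂ)-gγ))*(xα/((gα:ℂ)-gγ)) := by
    field_simp; ring
  rw [e0, e2]
  ring_nf
end

section
/- Suppose N_I ≥ 3 and consider real coefficients g_{ij} (i ≠ j in an index set I of size ≥ 3) such that every three-element subset {i,j,k} ⊂ I with i < j < k satisfies exactly one of: (type A_I) g_{ij} = g_{ji} = g_{ik} = g_{ki} = g_{jk} = g_{kj} = c for some nonzero constant c (possibly depending on the triple), or (type A_{II}) g_{ji} = g_{ki} = g_{kj} = 0 with g_{ij}, g_{ik}, g_{jk} all nonzero. If |I| ≥ 3, then either every triple is of type A_I or every triple is of type A_{II}; no mixture can occur. -/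
/-- A triple i < j < k is of type A_I: all six coefficients equal a common nonzero value. -/
def TripleAI {ι : Type*} (g : ι → ι → ℝ) (i j k : ι) : Prop :=
  ∃ c : ℝ, c ≠ 0 ∧ g i j = c ∧ g j i = c ∧ g i k = c ∧ g k i = c ∧ g j k = c ∧ g k j = c

/-- A triple i < j < k is of type A_II: the three "lower" coefficients vanish and
the three "upper" ones are nonzero. -/
def TripleAII {ι : Type*} (g : ι → ι → ℝ) (i j k : ι) : Prop :=
  g j i = 0 ∧ g k i = 0 ∧ g k j = 0 ∧ g i j ≠ 0 ∧ g i k ≠ 0 ∧ g j k ≠ 0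

section Aux

variable {ι : Type*} [LinearOrder ι] (g : ι → ι → ℝ)

/-- The "lower coefficient vanishes" predicate on an unordered pair. -/
def PairZ (a b : ι) : Prop := g (max a b) (min a b) = 0

lemma PairZ_symm {a b : ι} : PairZ g a b ↔ PairZ g b a := by
  unfold PairZ; rw [max_comm, min_comm]

lemma PairZ_lt {a b : ι} (hab : a < b) : PairZ g a b ↔ g b a = 0 := by
  unfold PairZ
  rw [max_eq_right hab.le, min_eq_left hab.le]

end Aux

/-- Rigidity: if |I| ≥ 3 and every ordered triple from I is of type A_I or of
type A_II, then either all triples are of type A_I or all are of type A_II. -/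
theorem AI_or_AII_global {ι : Type*} [LinearOrder ι] (I : Finset ι) (hI : 3 ≤ I.card)
    (g : ι → ι → ℝ) (hg : ∀ i ∈ I, ∀ j ∈ I, i < j → g i j ≠ 0)
    (h : ∀ i ∈ I, ∀ j ∈ I, ∀ k ∈ I, i < j → j < k → TripleAI g i j k ∨ TripleAII g i j k) :
    (∀ i ∈ I, ∀ j ∈ I, ∀ k ∈ I, i < j → j < k → TripleAI g i j k) ∨
    (∀ i ∈ I, ∀ j ∈ I, ∀ k ∈ I, i < j → j < k → TripleAII g i j k) := by
  -- triple-level dichotomy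
  have T : ∀ i ∈ I, ∀ j ∈ I, ∀ k ∈ I, i < j → j < k →
      (g j i = 0 ∧ g k i = 0 ∧ g k j = 0) ∨ (g j i ≠ 0 ∧ g k i ≠ 0 ∧ g k j ≠ 0) := by
    intro i hi j hj k hk hij hjk
    rcases h i hi j hj k hk hij hjk with ⟨c, hc, _, h2, _, h4, _, h6⟩ | ⟨h1, h2, h3, _, _, _⟩
    · right; rw [h2, h4, h6]; exact ⟨hc, hc, hc⟩
    · left; exact ⟨h1, h2, h3⟩
  -- the three pairs of a sorted triple agree
  have T' : ∀ i ∈ I, ∀ j ∈ I, ∀ k ∈ I, i < j → j < k →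
      (PairZ g i j ↔ PairZ g i k) ∧ (PairZ g i j ↔ PairZ g j k) := by
    intro i hi j hj k hk hij hjk
    rw [PairZ_lt g hij, PairZ_lt g hjk, PairZ_lt g (hij.trans hjk)]
    rcases T i hi j hj k hk hij hjk with ⟨h1, h2, h3⟩ | ⟨h1, h2, h3⟩
    · constructor <;> constructor <;> intro _ <;> assumption
    · constructor <;> constructor <;> intro hx <;> exact absurd hx (by assumption)
  -- adjacency: any two pairs of a 3-element set agree
  have adj : ∀ a ∈ I, ∀ b ∈ I, ∀ c ∈ I, a ≠ b → a ≠ c → b ≠ c →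
      (PairZ g a b ↔ PairZ g a c) := by
    intro a ha b hb c hc hab hac hbc
    have sab : PairZ g a b ↔ PairZ g b a := PairZ_symm g
    have sac : PairZ g a c ↔ PairZ g c a := PairZ_symm g
    rcases lt_trichotomy a b with h1 | h1 | h1
    · rcases lt_trichotomy a c with h2 | h2 | h2
      · rcases lt_trichotomy b c with h3 | h3 | h3
        · have := T' a ha b hb c hc h1 h3; tauto
        · exact absurd h3 hbc
        · have := T' a ha c hc b hb h2 h3; tauto
      · exact absurd h2 hac
      · have := T' c hc a ha b hb h2 h1; tauto
    · exact absurd h1 hab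
    · rcases lt_trichotomy a c with h2 | h2 | h2
      · have := T' b hb a ha c hc h1 h2; tauto
      · exact absurd h2 hac
      · rcases lt_trichotomy b c with h3 | h3 | h3
        · have := T' b hb c hc a ha h3 h2; tauto
        · exact absurd h3 hbc
        · have := T' c hc b hb a ha h3 h1; tauto
  -- any two pairs agree
  have pairs : ∀ a ∈ I, ∀ b ∈ I, a ≠ b → ∀ c ∈ I, ∀ d ∈ I, c ≠ d →
      (PairZ g a b ↔ PairZ g c d) := by
    intro a ha b hb hab c hc d hd hcd
    by_cases h1 : a = c
    · subst h1
      by_cases h2 : b = d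
      · subst h2; rfl
      · exact adj a ha b hb d hd hab hcd h2
    · by_cases h2 : a = d
      · subst h2
        by_cases h3 : b = c
        · subst h3; exact (PairZ_symm g)
        · exact (adj a ha b hb c hc hab h1 h3).trans (PairZ_symm g)
      · by_cases h3 : b = c
        · subst h3
          exact (PairZ_symm g).trans (adj b hb a ha d hd (Ne.symm hab) hcd h2)
        · by_cases h4 : b = d
          · subst h4
            exact (PairZ_symm g).trans ((adj b hb a ha c hc (Ne.symm hab) (Ne.symm hcd) h1).trans (PairZ_symm g))
          · exact (adj a ha b hb c hc hab h1 h3).trans ((PairZ_symm g).trans (adj c hc a ha d hd (Ne.symm h1) hcd h2))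
  -- get a base triple
  obtain ⟨s, hsI, hs3⟩ := Finset.exists_subset_card_eq hI
  obtain ⟨x, y, z, hxy, hxz, hyz, rfl⟩ := Finset.card_eq_three.mp hs3
  have hx : x ∈ I := hsI (by simp)
  have hy : y ∈ I := hsI (by simp)
  have hz : z ∈ I := hsI (by simp)
  -- sort base triple: we only need one pair with known type
  have key : ∀ i ∈ I, ∀ j ∈ I, ∀ k ∈ I, i < j → j < k →
      (PairZ g x y ↔ (TripleAII g i j k)) := by
    intro i hi j hj k hk hij hjk
    have hp := pairs x hx y hy hxy i hi j hj hij.ne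
    rw [PairZ_lt g hij] at hp
    rcases h i hi j hj k hk hij hjk with hAI | hAII
    · obtain ⟨c, hc, _, h2, _, _, _, _⟩ := hAI
      constructor
      · intro hz0
        exact absurd (hp.mp hz0) (h2 ▸ hc)
      · intro hA2; exact hp.mpr hA2.1
    · constructor
      · intro _; exact hAII
      · intro _; exact hp.mpr hAII.1
  by_cases hP : PairZ g x y
  · right
    intro i hi j hj k hk hij hjk
    exact (key i hi j hj k hk hij hjk).mp hP
  · left
    intro i hi j hj k hk hij hjk
    rcases h i hi j hj k hk hij hjk with hAI | hAII
    · exact hAI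
    · exact absurd ((key i hi j hj k hk hij hjk).mpr hAII) hP
end

section
/- Let α < β < γ with relations: g D_α D_β − (g − Λ) D_β D_α = x_β D_α − x_α D_β; g_γ D_α D_γ = −x_α D_γ; (g_γ − Λ) D_β D_γ = −x_β D_γ, where g ≠ 0 and g_γ ∉ {0, Λ}, x_α, x_β ∈ ℂ, Λ ∈ ℝ. Then the two complete reductions of D_α D_β D_γ agree (the B^{(3)}-type relations satisfy the diamond condition). -/
/-- B⁽³⁾ relations: g D_α D_β − (g−Λ) D_β D_α = x_β D_α − x_α D_β,
g_γ D_α D_γ = −x_α D_γ, (g_γ−Λ) D_β D_γ = −x_β D_γ (so x_γ = 0).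
Diamond condition holds. -/
theorem B3_diamond (g gγ Λ : ℝ) (hg : g ≠ 0) (hgγ : gγ ≠ 0) (hgγΛ : gγ ≠ Λ) (xα xβ : ℂ) :
    leftRed (((g-Λ)/g : ℝ):ℂ) 0 0 (xα/(g:ℂ)) (xβ/(g:ℂ)) (xα/(gγ:ℂ)) 0
        (xβ/((gγ:ℂ)-Λ)) 0
      = rightRed (((g-Λ)/g : ℝ):ℂ) 0 0 (xα/(g:ℂ)) (xβ/(g:ℂ)) (xα/(gγ:ℂ)) 0
        (xβ/((gγ:ℂ)-Λ)) 0 := by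
  have hgc : (g:ℂ) ≠ 0 := by exact_mod_cast hg
  have hgγc : (gγ:ℂ) ≠ 0 := by exact_mod_cast hgγ
  have hgγΛc : (gγ:ℂ) - Λ ≠ 0 := by
    intro h
    exact hgγΛ (by exact_mod_cast sub_eq_zero.mp h)
  unfold leftRed rightRed
  match_scalars <;> (try push_cast) <;> (try ring)
  linear_combination (xα*xβ*(gγ:ℂ)⁻¹*(-(Λ:ℂ)+(gγ:ℂ))⁻¹) * mul_inv_cancel₀ hgc
    - (xα*xβ*(g:ℂ)⁻¹*(-(Λ:ℂ)+(gγ:ℂ))⁻¹) * mul_inv_cancel₀ hgγc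
    + (xα*xβ*(g:ℂ)⁻¹*(gγ:ℂ)⁻¹) * mul_inv_cancel₀ (show (-(Λ:ℂ)+(gγ:ℂ)) ≠ 0 by rw [neg_add_eq_sub]; exact hgγΛc)
end

section
/- Let α < β < γ with relations: g_β D_α D_β − (g_β − Λ) D_β D_α = −x_α D_β; g_γ D_α D_γ − (g_γ − Λ) D_γ D_α = −x_α D_γ; g_{βγ} D_β D_γ − g_{γβ} D_γ D_β = 0, where g_β, g_γ, g_{βγ} ≠ 0, x_α ∈ ℂ∖{0}, Λ ∈ ℝ. Then the two complete reductions of D_α D_β D_γ agree (the C^{(1)}-type relations satisfy the diamond condition). -/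
/-- C⁽¹⁾ relations: g_β D_α D_β − (g_β−Λ) D_β D_α = −x_α D_β,
g_γ D_α D_γ − (g_γ−Λ) D_γ D_α = −x_α D_γ,
g_{βγ} D_β D_γ − g_{γβ} D_γ D_β = 0 (x_β = x_γ = 0, x_α ≠ 0).
Diamond condition holds. -/
theorem C1_diamond (gβ gγ gβγ gγβ Λ : ℝ) (hgβ : gβ ≠ 0) (hgγ : gγ ≠ 0) (hgβγ : gβγ ≠ 0)
    (xα : ℂ) (hxα : xα ≠ 0) :
    leftRed (((gβ-Λ)/gβ : ℝ):ℂ) (((gγ-Λ)/gγ : ℝ):ℂ) ((gγβ/gβγ : ℝ):ℂ)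
        (xα/(gβ:ℂ)) 0 (xα/(gγ:ℂ)) 0 0 0
      = rightRed (((gβ-Λ)/gβ : ℝ):ℂ) (((gγ-Λ)/gγ : ℝ):ℂ) ((gγβ/gβγ : ℝ):ℂ)
        (xα/(gβ:ℂ)) 0 (xα/(gγ:ℂ)) 0 0 0 := by
  have hβ : (gβ:ℂ) ≠ 0 := by exact_mod_cast hgβ
  have hγ : (gγ:ℂ) ≠ 0 := by exact_mod_cast hgγ
  have hβγ : (gβγ:ℂ) ≠ 0 := by exact_mod_cast hgβγ
  simp only [leftRed, rightRed, mul_zero, zero_mul, sub_zero, add_zero, zero_add,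
    zero_smul, neg_zero, zero_sub]
  congr 1
  congr 1
  push_cast
  field_simp
  ring
end

section
/- Let α < β < γ with relations: (g_α − Λ) D_α D_β = x_β D_α; g_α D_α D_γ = x_γ D_α; g D_β D_γ − (g − Λ) D_γ D_β = x_γ D_β − x_β D_γ, where g ≠ 0 and g_α ∉ {0, Λ}, x_β, x_γ ∈ ℂ, Λ ∈ ℝ. Then the two complete reductions of D_α D_β D_γ agree (the B^{(4)}-type relations satisfy the diamond condition). -/
/-- When `q1 = q2 = a1 = a2 = 0`, both reductions of `D_α D_β D_γ` end in a multiple of `D_α`. -/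
theorem leftRed_eq_rightRed_of_D0_coeff_eq (q3 b1 c2 b3 c3 : ℂ)
    (h : b1 * c2 = q3 * c2 * b1 + c3 * b1 - b3 * c2) :
    leftRed 0 0 q3 0 b1 0 c2 b3 c3 = rightRed 0 0 q3 0 b1 0 c2 b3 c3 := by
  unfold leftRed rightRed
  rw [h]
  simp

/-- The right side is `xβ / (gα - Λ) * (xγ / gα) * ((g - Λ) + gα - (gα - Λ)) / g`. -/
theorem B4_D0_coeff_eq {K : Type*} [Field K] (g gα Λ xβ xγ : K)
    (hg : g ≠ 0) (hgα : gα ≠ 0) (hgαΛ : gα - Λ ≠ 0) :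
    xβ / (gα - Λ) * (xγ / gα)
      = (g - Λ) / g * (xγ / gα) * (xβ / (gα - Λ)) + xγ / g * (xβ / (gα - Λ))
        - xβ / g * (xγ / gα) := by
  field_simp
  ring

/-- B⁽⁴⁾ relations: (g_α−Λ) D_α D_β = x_β D_α, g_α D_α D_γ = x_γ D_α,
g D_β D_γ − (g−Λ) D_γ D_β = x_γ D_β − x_β D_γ (x_α = 0).
Diamond condition holds. -/
theorem B4_diamond (g gα Λ : ℝ) (hg : g ≠ 0) (hgα : gα ≠ 0) (hgαΛ : gα ≠ Λ) (xβ xγ : ℂ) :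
    leftRed 0 0 (((g-Λ)/g : ℝ):ℂ) 0 (xβ/((gα:ℂ)-Λ)) 0 (xγ/(gα:ℂ)) (xβ/(g:ℂ)) (xγ/(g:ℂ))
      = rightRed 0 0 (((g-Λ)/g : ℝ):ℂ) 0 (xβ/((gα:ℂ)-Λ)) 0 (xγ/(gα:ℂ)) (xβ/(g:ℂ))
        (xγ/(g:ℂ)) := by
  apply leftRed_eq_rightRed_of_D0_coeff_eq
  push_cast
  exact B4_D0_coeff_eq _ _ _ _ _ (mod_cast hg) (mod_cast hgα)
    (sub_ne_zero.mpr (mod_cast hgαΛ))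
end

section
/- Let α < β < γ with relations D_α D_β = q_{βα} D_β D_α + x^{αβ}_β D_α − x^{αβ}_α D_β and similar for the other two pairs, and suppose the coefficients arise from a Diffusion-algebra ansatz g_{uv} with g_{uv} ≠ 0 for u < v, q_{vu} = g_{vu}/g_{uv}, x^{uv}_w = x_w/g_{uv}, and all of x_α, x_β, x_γ nonzero. If additionally all q-coefficients are nonzero (q_{βα} q_{γα} q_{γβ} ≠ 0), then the diamond condition on D_α D_β D_γ forces q_{βα} = q_{γα} = q_{γβ} = 1 and g_{αβ} = g_{αγ} = g_{βγ} (type A_I). -/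
/-! The cubic terms of the two reductions agree, so the diamond condition says that the six
lower ordered monomials have equal coefficients on both sides. Under the ansatz each of these
consistency equations is a nonzero multiple of a linear relation among the `g`'s, and the five
independent relations force all six `g`'s to coincide. -/

theorem coeffs_eq_zero_of_ordered_sum_eq_zero {c₁ c₂ c₃ c₄ c₅ c₆ : ℂ}
    (h : c₁ • (D 1 * D 0) + c₂ • (D 2 * D 0) + c₃ • (D 2 * D 1)
      + c₄ • D 0 + c₅ • D 1 + c₆ • D 2 = 0) :
    c₁ = 0 ∧ c₂ = 0 ∧ c₃ = 0 ∧ c₄ = 0 ∧ c₅ = 0 ∧ c₆ = 0 := by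
  -- Evaluate at the characters of the free algebra sending each generator to `0` or `1`.
  have eval (f : Fin 3 → ℂ) :
      c₁ * (f 1 * f 0) + c₂ * (f 2 * f 0) + c₃ * (f 2 * f 1) + c₄ * f 0 + c₅ * f 1 + c₆ * f 2
        = 0 := by
    simpa [D] using congrArg (FreeAlgebra.lift ℂ f) h
  have e₀ := eval ![1, 0, 0]
  have e₁ := eval ![0, 1, 0]
  have e₂ := eval ![0, 0, 1]
  have e₀₁ := eval ![1, 1, 0]
  have e₀₂ := eval ![1, 0, 1]
  have e₁₂ := eval ![0, 1, 1]
  simp only [Matrix.cons_val_zero, Matrix.cons_val_one, Matrix.cons_val_two, Matrix.head_cons,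
    Matrix.tail_cons, mul_one, mul_zero, add_zero, zero_add] at e₀ e₁ e₂ e₀₁ e₀₂ e₁₂
  exact ⟨by linear_combination e₀₁ - e₀ - e₁, by linear_combination e₀₂ - e₀ - e₂,
    by linear_combination e₁₂ - e₁ - e₂, e₀, e₁, e₂⟩

theorem leftRed_sub_rightRed (q1 q2 q3 a1 b1 a2 c2 b3 c3 : ℂ) :
    leftRed q1 q2 q3 a1 b1 a2 c2 b3 c3 - rightRed q1 q2 q3 a1 b1 a2 c2 b3 c3
      = (q1 * (q2*c3 + c2 - q3*c2 - c3)) • (D 1 * D 0)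
        + (q2 * (b1 - q1*b3 - q3*b1 + b3)) • (D 2 * D 0)
        + (q3 * (a2 + q2*a1 - q1*a2 - a1)) • (D 2 * D 1)
        + (b1*c2 - q3*c2*b1 - c3*b1 + b3*c2) • D 0
        + (q3*c2*a1 - q1*a2*c3) • D 1
        + (q1*a2*b3 - b1*a2 + a1*b3 - b3*a2) • D 2 := by
  rw [leftRed, rightRed]
  module

theorem consistency_of_leftRed_eq_rightRed {q1 q2 q3 a1 b1 a2 c2 b3 c3 : ℂ}
    (h : leftRed q1 q2 q3 a1 b1 a2 c2 b3 c3 = rightRed q1 q2 q3 a1 b1 a2 c2 b3 c3) :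
    q1 * (q2*c3 + c2 - q3*c2 - c3) = 0 ∧ q2 * (b1 - q1*b3 - q3*b1 + b3) = 0
      ∧ q3 * (a2 + q2*a1 - q1*a2 - a1) = 0 ∧ b1*c2 - q3*c2*b1 - c3*b1 + b3*c2 = 0
      ∧ q3*c2*a1 - q1*a2*c3 = 0 ∧ q1*a2*b3 - b1*a2 + a1*b3 - b3*a2 = 0 := by
  apply coeffs_eq_zero_of_ordered_sum_eq_zero
  rw [← leftRed_sub_rightRed, h, sub_self]

theorem eq_zero_of_ofReal_mul_eq_zero {r : ℝ} {z : ℂ} (hz : z ≠ 0) (h : (r : ℂ) * z = 0) :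
    r = 0 :=
  Complex.ofReal_eq_zero.1 ((mul_eq_zero.1 h).resolve_right hz)

theorem linear_relations_of_diamond {gαβ gβα gαγ gγα gβγ gγβ : ℝ} {xα xβ xγ : ℂ}
    (h1 : gαβ ≠ 0) (h2 : gαγ ≠ 0) (h3 : gβγ ≠ 0)
    (h4 : gβα ≠ 0) (h5 : gγα ≠ 0) (h6 : gγβ ≠ 0)
    (hxα : xα ≠ 0) (hxβ : xβ ≠ 0) (hxγ : xγ ≠ 0)
    (h : leftRed ((gβα/gαβ : ℝ):ℂ) ((gγα/gαγ : ℝ):ℂ) ((gγβ/gβγ : ℝ):ℂ)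
          (xα/(gαβ:ℂ)) (xβ/(gαβ:ℂ)) (xα/(gαγ:ℂ)) (xγ/(gαγ:ℂ)) (xβ/(gβγ:ℂ)) (xγ/(gβγ:ℂ))
        = rightRed ((gβα/gαβ : ℝ):ℂ) ((gγα/gαγ : ℝ):ℂ) ((gγβ/gβγ : ℝ):ℂ)
          (xα/(gαβ:ℂ)) (xβ/(gαβ:ℂ)) (xα/(gαγ:ℂ)) (xγ/(gαγ:ℂ)) (xβ/(gβγ:ℂ)) (xγ/(gβγ:ℂ))) :
    gγα + gβγ - gγβ - gαγ = 0 ∧ gβγ - gβα - gγβ + gαβ = 0 ∧ gαβ + gγα - gβα - gαγ = 0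
      ∧ gβγ - gγβ - gαγ + gαβ = 0 ∧ gγβ - gβα = 0 := by
  -- Each coefficient is `g_{vu} x_w / (gαβ gαγ gβγ)` or `x_u x_w / (gαβ gαγ gβγ)` times a
  -- linear form in the `g`'s; that of `D 2` adds nothing once those of `D 0`, `D 1` vanish.
  obtain ⟨e₁, e₂, e₃, e₄, e₅, -⟩ := consistency_of_leftRed_eq_rightRed h
  push_cast at e₁ e₂ e₃ e₄ e₅
  have hA : (gαβ : ℂ) ≠ 0 := by exact_mod_cast h1
  have hB : (gαγ : ℂ) ≠ 0 := by exact_mod_cast h2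
  have hC : (gβγ : ℂ) ≠ 0 := by exact_mod_cast h3
  refine ⟨eq_zero_of_ofReal_mul_eq_zero (z := gβα * xγ) (by simp [*]) ?_,
    eq_zero_of_ofReal_mul_eq_zero (z := gγα * xβ) (by simp [*]) ?_,
    eq_zero_of_ofReal_mul_eq_zero (z := gγβ * xα) (by simp [*]) ?_,
    eq_zero_of_ofReal_mul_eq_zero (z := xβ * xγ) (by simp [*]) ?_,
    eq_zero_of_ofReal_mul_eq_zero (z := xα * xγ) (by simp [*]) ?_⟩
  · push_cast; field_simp at e₁ ⊢; linear_combination e₁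
  · push_cast; field_simp at e₂ ⊢; linear_combination e₂
  · push_cast; field_simp at e₃ ⊢; linear_combination e₃
  · push_cast; field_simp at e₄ ⊢; linear_combination e₄
  · push_cast; field_simp at e₅ ⊢; linear_combination e₅

/-- Classification: with all x's nonzero and all q's = g_{vu}/g_{uv} nonzero,
the diamond condition on D_α D_β D_γ forces q_{βα} = q_{γα} = q_{γβ} = 1 and
g_{αβ} = g_{αγ} = g_{βγ} (the A_I family). -/
theorem diamond_forces_AI (gαβ gβα gαγ gγα gβγ gγβ : ℝ) (xα xβ xγ : ℂ)
    (h1 : gαβ ≠ 0) (h2 : gαγ ≠ 0) (h3 : gβγ ≠ 0)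
    (h4 : gβα ≠ 0) (h5 : gγα ≠ 0) (h6 : gγβ ≠ 0)
    (hxα : xα ≠ 0) (hxβ : xβ ≠ 0) (hxγ : xγ ≠ 0)
    (hdiamond :
      leftRed ((gβα/gαβ : ℝ):ℂ) ((gγα/gαγ : ℝ):ℂ) ((gγβ/gβγ : ℝ):ℂ)
          (xα/(gαβ:ℂ)) (xβ/(gαβ:ℂ)) (xα/(gαγ:ℂ)) (xγ/(gαγ:ℂ)) (xβ/(gβγ:ℂ)) (xγ/(gβγ:ℂ))
        = rightRed ((gβα/gαβ : ℝ):ℂ) ((gγα/gαγ : ℝ):ℂ) ((gγβ/gβγ : ℝ):ℂ)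
          (xα/(gαβ:ℂ)) (xβ/(gαβ:ℂ)) (xα/(gαγ:ℂ)) (xγ/(gαγ:ℂ)) (xβ/(gβγ:ℂ)) (xγ/(gβγ:ℂ))) :
    gβα = gαβ ∧ gγα = gαγ ∧ gγβ = gβγ ∧ gαβ = gαγ ∧ gαγ = gβγ := by
  obtain ⟨r₁, r₂, r₃, r₄, r₅⟩ :=
    linear_relations_of_diamond h1 h2 h3 h4 h5 h6 hxα hxβ hxγ hdiamond
  refine ⟨?_, ?_, ?_, ?_, ?_⟩ <;> linarith
end
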